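/- Let V be a (G_Γ, β, γ0)-vertex algebra and M a (G_Γ, β, γ0)-left V-module as in the context, and assume β satisfies β(γ1, γ2)·β(γ1, γ3) = β(γ1, γ2+γ3) for all γ1, γ2, γ3 ∈ Γ. Then for all γ1, γ2 ∈ Γ, u ∈ V_{γ1}, v ∈ V_{γ2}, w ∈ M: (i) Y^M_0(u, Y^M_{−1}(v, w)) − Y^M_{−1}(Y_0(u, v), w) − β(γ1, γ2)·Y^M_{−1}(v, Y^M_0(u, w)) ∈ C₂(M); (ii) Y^M_0(Y_{−1}(u, v), w) − Y^M_{−1}(u, Y^M_0(v, w)) − β(γ1, γ2)·Y^M_{−1}(v, Y^M_0(u, w)) ∈ C₂(M). Consequently R(M) = M/C₂(M), with action induced by Y^M_{−1} and bracket induced by Y^M_0, is a (G_Γ, β)-left Poisson module for the β-commutative (G_Γ, β)-Poisson algebra R(V) = V/C₂(V) of degree 0. -/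

import Mathlib

/-- The generalized binomial coefficient `binom(a, i) = a(a-1)⋯(a-i+1)/i!`
for `a : ℤ`, `i : ℕ`; it is an integer. -/
def zbinom (a : ℤ) (i : ℕ) : ℤ :=
  if 0 ≤ a then (a.toNat.choose i : ℤ)
  else (-1 : ℤ) ^ i * ((((i : ℤ) - a - 1).toNat).choose i : ℤ)

/-- A `(G_Γ, β, γ0)`-vertex algebra in component form, *without* the
derivation axiom (which is to be derived): a `Γ`-graded `k`-vector space `V`
(internal direct sum of the subspaces `Vg γ`), bilinear products
`Y n : V → V → V` of degree `n • γ0`, and a vacuum vector `vac ∈ V_0`,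
satisfying truncation, vacuum, creation and the `β`-Jacobi identity. -/
structure PreVA (k : Type*) [Field k] (Γ : Type*) [AddCommGroup Γ] [DecidableEq Γ]
    (γ0 : Γ) (β : Γ → Γ → k)
    (V : Type*) [AddCommGroup V] [Module k V] where
  Vg : Γ → Submodule k V
  internal : DirectSum.IsInternal Vg
  Y : ℤ → V →ₗ[k] V →ₗ[k] V
  vac : V
  vac_mem : vac ∈ Vg 0
  grading : ∀ (n : ℤ) (γ1 γ2 : Γ) (u v : V), u ∈ Vg γ1 → v ∈ Vg γ2 →
      Y n u v ∈ Vg (γ1 + γ2 + n • γ0)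
  truncation : ∀ u v : V, ∃ N : ℤ, ∀ n : ℤ, N ≤ n → Y n u v = 0
  vacuum_left : ∀ v : V, Y (-1) vac v = v
  vacuum_left' : ∀ n : ℤ, n ≠ -1 → ∀ v : V, Y n vac v = 0
  creation : ∀ v : V, Y (-1) v vac = v
  creation' : ∀ n : ℤ, 0 ≤ n → ∀ v : V, Y n v vac = 0
  jacobi : ∀ (l m n : ℤ) (γ1 γ2 : Γ) (u v w : V), u ∈ Vg γ1 → v ∈ Vg γ2 →
      (∑ᶠ i : ℕ, (((-1 : k) ^ i * (zbinom l i : k)) •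
          Y (m + l - (i : ℤ)) u (Y (n + (i : ℤ)) v w)))
        - ((-1 : k) ^ l * β γ1 γ2) •
            (∑ᶠ i : ℕ, (((-1 : k) ^ i * (zbinom l i : k)) •
              Y (n + l - (i : ℤ)) v (Y (m + (i : ℤ)) u w)))
        = ∑ᶠ i : ℕ, ((zbinom m i : k) •
            Y (m + n - (i : ℤ)) (Y (l + (i : ℤ)) u v) w)


/-- A `(G_Γ, β, γ0)`-vertex algebra in component form: a `PreVA` together
with the derivation properties of `D(v) = Y_{-2}(v, 𝟙)`, namely
`D(Y_n(u,v)) - Y_n(u, D v) = -n • Y_{n-1}(u,v)` and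
`Y_n(D u, v) = -n • Y_{n-1}(u,v)`. -/
structure VA (k : Type*) [Field k] (Γ : Type*) [AddCommGroup Γ] [DecidableEq Γ]
    (γ0 : Γ) (β : Γ → Γ → k)
    (V : Type*) [AddCommGroup V] [Module k V]
    extends PreVA k Γ γ0 β V where
  deriv1 : ∀ (n : ℤ) (u v : V),
      Y (-2) (Y n u v) vac - Y n u (Y (-2) v vac) = (-n) • Y (n - 1) u v
  deriv2 : ∀ (n : ℤ) (u v : V),
      Y n (Y (-2) u vac) v = (-n) • Y (n - 1) u v

/-- The subspace `C₂(V) = span_k { Y_{-2}(u, v) : u, v ∈ V }`. -/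
def C2 {k Γ V : Type*} [Field k] [AddCommGroup Γ] [DecidableEq Γ]
    [AddCommGroup V] [Module k V] {γ0 : Γ} {β : Γ → Γ → k}
    (A : VA k Γ γ0 β V) : Submodule k V :=
  Submodule.span k {x : V | ∃ u v : V, A.Y (-2) u v = x}

/-- The data of a `(G_Γ, β, γ0)`-left module over a vertex algebra `A`,
*without* the derivation axiom: a `Γ`-graded `k`-vector space `M` with
bilinear action maps `YM n : V → M → M` of degree `n • γ0`, satisfying the
vacuum, truncation and `β`-Jacobi axioms. -/
structure PreVMod {k Γ V : Type*} [Field k] [AddCommGroup Γ] [DecidableEq Γ]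
    [AddCommGroup V] [Module k V] {γ0 : Γ} {β : Γ → Γ → k}
    (A : VA k Γ γ0 β V)
    (M : Type*) [AddCommGroup M] [Module k M] where
  Mg : Γ → Submodule k M
  internal : DirectSum.IsInternal Mg
  YM : ℤ → V →ₗ[k] M →ₗ[k] M
  grading : ∀ (n : ℤ) (γ δ : Γ) (v : V) (w : M), v ∈ A.Vg γ → w ∈ Mg δ →
      YM n v w ∈ Mg (γ + δ + n • γ0)
  vacuum : ∀ w : M, YM (-1) A.vac w = w
  vacuum' : ∀ n : ℤ, n ≠ -1 → ∀ w : M, YM n A.vac w = 0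
  truncation : ∀ (v : V) (w : M), ∃ N : ℤ, ∀ n : ℤ, N ≤ n → YM n v w = 0
  jacobi : ∀ (l m n : ℤ) (γ1 γ2 : Γ) (u v : V) (w : M),
      u ∈ A.Vg γ1 → v ∈ A.Vg γ2 →
      (∑ᶠ i : ℕ, (((-1 : k) ^ i * (zbinom l i : k)) •
          YM (m + l - (i : ℤ)) u (YM (n + (i : ℤ)) v w)))
        - ((-1 : k) ^ l * β γ1 γ2) •
            (∑ᶠ i : ℕ, (((-1 : k) ^ i * (zbinom l i : k)) •
              YM (n + l - (i : ℤ)) v (YM (m + (i : ℤ)) u w)))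
        = ∑ᶠ i : ℕ, ((zbinom m i : k) •
            YM (m + n - (i : ℤ)) (A.Y (l + (i : ℤ)) u v) w)

/-- A `(G_Γ, β, γ0)`-left module over the vertex algebra `A`: a `PreVMod`
together with the derivation axioms: there is a `k`-linear `D^M : M → M` with
`D^M(Y^M_n(v,w)) - Y^M_n(v, D^M w) = -n • Y^M_{n-1}(v,w)` and
`Y^M_n(D v, w) = -n • Y^M_{n-1}(v,w)` where `D(v) = Y_{-2}(v, 𝟙)`. -/
structure VMod {k Γ V : Type*} [Field k] [AddCommGroup Γ] [DecidableEq Γ]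
    [AddCommGroup V] [Module k V] {γ0 : Γ} {β : Γ → Γ → k}
    (A : VA k Γ γ0 β V)
    (M : Type*) [AddCommGroup M] [Module k M]
    extends PreVMod A M where
  DM : M →ₗ[k] M
  derivM1 : ∀ (n : ℤ) (v : V) (w : M),
      DM (YM n v w) - YM n v (DM w) = (-n) • YM (n - 1) v w
  derivM2 : ∀ (n : ℤ) (v : V) (w : M),
      YM n (A.Y (-2) v A.vac) w = (-n) • YM (n - 1) v w

/-- The subspace `C₂(M) = span_k { Y^M_{-2}(v, w) : v ∈ V, w ∈ M }`. -/
def C2M {k Γ V : Type*} [Field k] [AddCommGroup Γ] [DecidableEq Γ]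
    [AddCommGroup V] [Module k V] {γ0 : Γ} {β : Γ → Γ → k}
    {A : VA k Γ γ0 β V} {M : Type*} [AddCommGroup M] [Module k M]
    (B : VMod A M) : Submodule k M :=
  Submodule.span k {x : M | ∃ (v : V) (w : M), B.YM (-2) v w = x}

/-! All identities come from the `β`-Jacobi identity with `l = 0` or `m = 0`, read modulo
`C₂(M)`. Modes `n ≤ -2` lie in `C₂(M)`: the derivation axiom `Y_n(D v, w) = -n Y_{n-1}(v, w)`
lowers the mode, dividing by `-n` in characteristic zero. Hence modulo `C₂(M)` the Jacobi sums
collapse to their `i = 0` terms: `l = 0` gives the commutator formula for `Y_0` (even exactly),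
and `m = 0`, `l = -1` gives associativity of `Y_{-1}` and the Leibniz rule (ii). The same
collapse shows that `Y_n(C₂(V), M)` and `Y_n(V, C₂(M))` lie in `C₂(M)` for `n ≤ 0`, so `Y_{-1}`
and `Y_0` descend to the quotients; `V` itself is treated as a module over itself. Since the
Jacobi identity is only assumed for homogeneous `u, v`, identities for arbitrary vectors follow
by bilinearity from the grading. -/

lemma zbinom_zero_right (a : ℤ) : zbinom a 0 = 1 := by
  unfold zbinom; split <;> simp

lemma zbinom_zero_left {i : ℕ} (hi : i ≠ 0) : zbinom 0 i = 0 := by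
  simp [zbinom, Nat.choose_eq_zero_of_lt (Nat.pos_of_ne_zero hi)]

lemma finsum_sub_apply_zero_mem {X S : Type*} [AddCommGroup X] [SetLike S X]
    [AddSubgroupClass S X] (p : S) {f : ℕ → X} (hf : (Function.support f).Finite)
    (h : ∀ i ≠ 0, f i ∈ p) : ∑ᶠ i, f i - f 0 ∈ p := by
  classical
  rw [finsum_eq_sum_of_support_subset f (s := insert 0 hf.toFinset) (by simp),
    ← Finset.add_sum_erase _ _ (Finset.mem_insert_self _ _), add_sub_cancel_left]
  exact sum_mem fun i hi => h i (Finset.ne_of_mem_erase hi)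

section

variable {k Γ V : Type*} [Field k] [AddCommGroup Γ] [DecidableEq Γ] [AddCommGroup V]
  [Module k V] {γ0 : Γ} {β : Γ → Γ → k}

lemma VA.mem_of_homogeneous (A : VA k Γ γ0 β V) {X : Type*} [AddCommGroup X] [Module k X]
    (g : V →ₗ[k] X) (p : Submodule k X) (h : ∀ γ, ∀ u ∈ A.Vg γ, g u ∈ p) (u : V) :
    g u ∈ p :=
  (iSup_le fun γ u hu => h γ u hu : ⨆ γ, A.Vg γ ≤ p.comap g)
    (A.internal.submodule_iSup_eq_top ▸ Submodule.mem_top)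

lemma VA.mem_of_homogeneous₂ (A : VA k Γ γ0 β V) {X : Type*} [AddCommGroup X] [Module k X]
    (f : V →ₗ[k] V →ₗ[k] X) (p : Submodule k X)
    (h : ∀ (γ1 γ2 : Γ) (u v : V), u ∈ A.Vg γ1 → v ∈ A.Vg γ2 → f u v ∈ p) (u v : V) :
    f u v ∈ p :=
  A.mem_of_homogeneous (f.flip v) p
    (fun γ1 u hu => A.mem_of_homogeneous (f u) p (fun γ2 v hv => h γ1 γ2 u v hu hv) v) u

end

namespace VMod

variable {k Γ V M : Type*} [Field k] [AddCommGroup Γ] [DecidableEq Γ] [AddCommGroup V]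
  [Module k V] [AddCommGroup M] [Module k M] {γ0 : Γ} {β : Γ → Γ → k} {A : VA k Γ γ0 β V}
  (B : VMod A M)

theorem YM_mem_C2M [CharZero k] {n : ℤ} (hn : n ≤ -2) (v : V) (w : M) :
    B.YM n v w ∈ C2M B := by
  induction n, hn using Int.leInductionDown generalizing v with
  | base => exact Submodule.subset_span ⟨v, w, rfl⟩
  | pred n hn ih =>
    have h := ih (A.Y (-2) v A.vac)
    rw [B.derivM2, ← Int.cast_smul_eq_zsmul k] at h
    exact (Submodule.smul_mem_iff _ (by exact_mod_cast (by omega : -n ≠ 0))).mp h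

theorem finite_support_smul_YM_YM (c : ℕ → k) (a b : ℤ) (u v : V) (w : M) :
    (Function.support fun i : ℕ => c i • B.YM (a - i) u (B.YM (b + i) v w)).Finite := by
  obtain ⟨N, hN⟩ := B.truncation v w
  refine (Set.finite_lt_nat (N - b).toNat).subset fun i hi => ?_
  by_contra hle
  exact hi (by simp only [hN (b + i) (by simp at hle; omega), map_zero, smul_zero])

theorem commutator_formula (m n : ℤ) {γ1 γ2 : Γ} {u v : V} (hu : u ∈ A.Vg γ1)
    (hv : v ∈ A.Vg γ2) (w : M) :
    B.YM m u (B.YM n v w) - β γ1 γ2 • B.YM n v (B.YM m u w) =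
      ∑ᶠ i : ℕ, (zbinom m i : k) • B.YM (m + n - i) (A.Y i u v) w := by
  have h := B.jacobi 0 m n γ1 γ2 u v w hu hv
  rw [finsum_eq_single _ 0 fun i hi => by simp [zbinom_zero_left hi],
    finsum_eq_single _ 0 fun i hi => by simp [zbinom_zero_left hi]] at h
  simpa [zbinom_zero_right] using h

theorem YM_zero_commutator (n : ℤ) {γ1 γ2 : Γ} {u v : V} (hu : u ∈ A.Vg γ1)
    (hv : v ∈ A.Vg γ2) (w : M) :
    B.YM 0 u (B.YM n v w) - β γ1 γ2 • B.YM n v (B.YM 0 u w) = B.YM n (A.Y 0 u v) w := by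
  rw [B.commutator_formula 0 n hu hv, finsum_eq_single _ 0 fun i hi => by
    simp [zbinom_zero_left hi]]
  simp [zbinom_zero_right]

variable [CharZero k]

theorem iterate_formula_mod_C2M {l n : ℤ} (hl : l ≤ -1) (hnl : n + l ≤ -1) {γ1 γ2 : Γ}
    {u v : V} (hu : u ∈ A.Vg γ1) (hv : v ∈ A.Vg γ2) (w : M) :
    (Submodule.Quotient.mk (B.YM n (A.Y l u v) w) : M ⧸ C2M B) =
      Submodule.Quotient.mk (B.YM l u (B.YM n v w))
        - ((-1 : k) ^ l * β γ1 γ2) • Submodule.Quotient.mk (B.YM (n + l) v (B.YM 0 u w)) := by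
  set c : ℕ → k := fun i => (-1) ^ i * (zbinom l i : k)
  have h := B.jacobi l 0 n γ1 γ2 u v w hu hv
  rw [finsum_eq_single (fun i : ℕ => (zbinom 0 i : k) • _) 0 fun i hi => by
    simp [zbinom_zero_left hi]] at h
  have h1 := finsum_sub_apply_zero_mem (C2M B) (B.finite_support_smul_YM_YM c (0 + l) n u v w)
    fun i _ => Submodule.smul_mem _ _ (B.YM_mem_C2M (by omega) _ _)
  have h2 := finsum_sub_apply_zero_mem (C2M B) (B.finite_support_smul_YM_YM c (n + l) 0 v u w)
    fun i _ => Submodule.smul_mem _ _ (B.YM_mem_C2M (by omega) _ _)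
  rw [← Submodule.Quotient.eq] at h1 h2
  have hq := congrArg (Submodule.Quotient.mk (p := C2M B)) h
  rw [Submodule.Quotient.mk_sub, Submodule.Quotient.mk_smul, h1, h2] at hq
  simpa [c, zbinom_zero_right] using hq.symm

theorem mk_YM_zero_YM_neg_one {γ1 γ2 : Γ} {u v : V} (hu : u ∈ A.Vg γ1) (hv : v ∈ A.Vg γ2)
    (w : M) :
    (Submodule.Quotient.mk (B.YM 0 (A.Y (-1) u v) w) : M ⧸ C2M B) =
      Submodule.Quotient.mk (B.YM (-1) u (B.YM 0 v w))
        + β γ1 γ2 • Submodule.Quotient.mk (B.YM (-1) v (B.YM 0 u w)) := by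
  rw [B.iterate_formula_mod_C2M le_rfl (by norm_num) hu hv w]
  simp [sub_eq_add_neg]

theorem YM_YM_neg_two_mem_C2M {m : ℤ} (hm : m ≤ 0) (u v : V) (w : M) :
    B.YM m u (B.YM (-2) v w) ∈ C2M B := by
  refine A.mem_of_homogeneous₂ ((B.YM m).compl₂ ((B.YM (-2)).flip w)) _
    (fun γ1 γ2 u v hu hv => ?_) u v
  rw [LinearMap.compl₂_apply, LinearMap.flip_apply, ← sub_add_cancel (B.YM m u _),
    B.commutator_formula m (-2) hu hv w]
  refine add_mem (finsum_induction _ (zero_mem _) (fun _ _ => add_mem) fun i => ?_) ?_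
  · exact Submodule.smul_mem _ _ (B.YM_mem_C2M (by omega) _ _)
  · exact Submodule.smul_mem _ _ (B.YM_mem_C2M le_rfl _ _)

theorem YM_Y_neg_two_mem_C2M {n : ℤ} (hn : n ≤ 0) (u v : V) (w : M) :
    B.YM n (A.Y (-2) u v) w ∈ C2M B := by
  refine A.mem_of_homogeneous₂ ((A.Y (-2)).compr₂ ((B.YM n).flip w)) _
    (fun γ1 γ2 u v hu hv => ?_) u v
  rw [LinearMap.compr₂_apply, LinearMap.flip_apply, ← Submodule.Quotient.mk_eq_zero,
    B.iterate_formula_mod_C2M (by norm_num) (by omega) hu hv w,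
    (Submodule.Quotient.mk_eq_zero _).mpr (B.YM_mem_C2M le_rfl _ _),
    (Submodule.Quotient.mk_eq_zero _).mpr (B.YM_mem_C2M (by omega) _ _), smul_zero, sub_zero]

theorem mk_YM_neg_one_assoc (u v : V) (w : M) :
    (Submodule.Quotient.mk (B.YM (-1) u (B.YM (-1) v w)) : M ⧸ C2M B) =
      Submodule.Quotient.mk (B.YM (-1) (A.Y (-1) u v) w) := by
  rw [Submodule.Quotient.eq]
  refine A.mem_of_homogeneous₂
    ((B.YM (-1)).compl₂ ((B.YM (-1)).flip w) - (A.Y (-1)).compr₂ ((B.YM (-1)).flip w)) _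
    (fun γ1 γ2 u v hu hv => ?_) u v
  rw [LinearMap.sub_apply, LinearMap.sub_apply, LinearMap.compl₂_apply, LinearMap.compr₂_apply,
    LinearMap.flip_apply, LinearMap.flip_apply, ← Submodule.Quotient.eq,
    B.iterate_formula_mod_C2M le_rfl (by norm_num) hu hv w,
    (Submodule.Quotient.mk_eq_zero _).mpr (B.YM_mem_C2M (by norm_num) v (B.YM 0 u w)), smul_zero,
    sub_zero]

theorem YM_mem_C2M_of_mem_C2 {n : ℤ} (hn : n ≤ 0) {c : V} (hc : c ∈ C2 A) (w : M) :
    B.YM n c w ∈ C2M B :=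
  (Submodule.span_le (p := (C2M B).comap ((B.YM n).flip w))).mpr
    (by rintro _ ⟨u, v, rfl⟩; exact B.YM_Y_neg_two_mem_C2M hn u v w) hc

theorem YM_mem_C2M_of_mem_C2M {n : ℤ} (hn : n ≤ 0) (v : V) {x : M} (hx : x ∈ C2M B) :
    B.YM n v x ∈ C2M B :=
  (Submodule.span_le (p := (C2M B).comap (B.YM n v))).mpr
    (by rintro _ ⟨u, w, rfl⟩; exact B.YM_YM_neg_two_mem_C2M hn v u w) hx

def liftC2 (n : ℤ) (hn : n ≤ 0) : V ⧸ C2 A →ₗ[k] M ⧸ C2M B →ₗ[k] M ⧸ C2M B :=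
  ((B.YM n).compr₂ (C2M B).mkQ).liftQ₂ (C2 A) (C2M B)
    (fun _ hc => LinearMap.ext fun w => by
      simpa using B.YM_mem_C2M_of_mem_C2 hn hc w)
    (fun _ hx => LinearMap.ext fun v => by
      simpa using B.YM_mem_C2M_of_mem_C2M hn v hx)

end VMod

def VA.toVMod {k Γ V : Type*} [Field k] [AddCommGroup Γ] [DecidableEq Γ] [AddCommGroup V]
    [Module k V] {γ0 : Γ} {β : Γ → Γ → k} (A : VA k Γ γ0 β V) : VMod A V where
  Mg := A.Vg
  internal := A.internal
  grading := A.grading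
  truncation := A.truncation
  jacobi := A.jacobi
  YM := A.Y
  vacuum := A.vacuum_left
  vacuum' := A.vacuum_left'
  DM := (A.Y (-2)).flip A.vac
  derivM1 := A.deriv1
  derivM2 := A.deriv2

theorem statement16_general {k Γ V M : Type*} [Field k] [CharZero k] [AddCommGroup Γ]
    [DecidableEq Γ] [AddCommGroup V] [Module k V] [AddCommGroup M] [Module k M]
    (γ0 : Γ) (β : Γ → Γ → k) (A : VA k Γ γ0 β V) (B : VMod A M) :
    (∀ (γ1 γ2 : Γ) (u v : V) (w : M), u ∈ A.Vg γ1 → v ∈ A.Vg γ2 →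
      B.YM 0 u (B.YM (-1) v w) - B.YM (-1) (A.Y 0 u v) w
        - β γ1 γ2 • B.YM (-1) v (B.YM 0 u w) ∈ C2M B) ∧
    (∀ (γ1 γ2 : Γ) (u v : V) (w : M), u ∈ A.Vg γ1 → v ∈ A.Vg γ2 →
      B.YM 0 (A.Y (-1) u v) w - B.YM (-1) u (B.YM 0 v w)
        - β γ1 γ2 • B.YM (-1) v (B.YM 0 u w) ∈ C2M B) ∧
    (∃ (π π0 : (V ⧸ C2 A) → (V ⧸ C2 A) → (V ⧸ C2 A))
       (πM π0M : (V ⧸ C2 A) → (M ⧸ C2M B) → (M ⧸ C2M B)),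
      (∀ u v : V, π (Submodule.Quotient.mk u) (Submodule.Quotient.mk v)
          = Submodule.Quotient.mk (A.Y (-1) u v)) ∧
      (∀ u v : V, π0 (Submodule.Quotient.mk u) (Submodule.Quotient.mk v)
          = Submodule.Quotient.mk (A.Y 0 u v)) ∧
      (∀ (v : V) (w : M),
        πM (Submodule.Quotient.mk v) (Submodule.Quotient.mk w)
          = Submodule.Quotient.mk (B.YM (-1) v w)) ∧
      (∀ (v : V) (w : M),
        π0M (Submodule.Quotient.mk v) (Submodule.Quotient.mk w)
          = Submodule.Quotient.mk (B.YM 0 v w)) ∧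
      -- `R(M)` is a left module for the algebra `R(V)`
      (∀ (a b : V ⧸ C2 A) (m : M ⧸ C2M B), πM (π a b) m = πM a (πM b m)) ∧
      (∀ m : M ⧸ C2M B, πM (Submodule.Quotient.mk A.vac) m = m) ∧
      -- `R(M)` is a left Lie module for the Lie bracket of `R(V)`
      (∀ (γ1 γ2 : Γ) (u v : V), u ∈ A.Vg γ1 → v ∈ A.Vg γ2 →
        ∀ m : M ⧸ C2M B,
        π0M (π0 (Submodule.Quotient.mk u) (Submodule.Quotient.mk v)) m
          = π0M (Submodule.Quotient.mk u) (π0M (Submodule.Quotient.mk v) m)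
            - β γ1 γ2 •
                π0M (Submodule.Quotient.mk v)
                  (π0M (Submodule.Quotient.mk u) m)) ∧
      -- Poisson module compatibility (3)
      (∀ (γ1 γ2 : Γ) (u v : V), u ∈ A.Vg γ1 → v ∈ A.Vg γ2 →
        ∀ m : M ⧸ C2M B,
        π0M (Submodule.Quotient.mk u) (πM (Submodule.Quotient.mk v) m)
          = πM (π0 (Submodule.Quotient.mk u) (Submodule.Quotient.mk v)) m
            + β γ1 γ2 •
                πM (Submodule.Quotient.mk v)
                  (π0M (Submodule.Quotient.mk u) m)) ∧
      -- Poisson module compatibility (4)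
      (∀ (γ1 γ2 : Γ) (u v : V), u ∈ A.Vg γ1 → v ∈ A.Vg γ2 →
        ∀ m : M ⧸ C2M B,
        π0M (π (Submodule.Quotient.mk u) (Submodule.Quotient.mk v)) m
          = πM (Submodule.Quotient.mk u) (π0M (Submodule.Quotient.mk v) m)
            + β γ1 γ2 •
                πM (Submodule.Quotient.mk v)
                  (π0M (Submodule.Quotient.mk u) m))) := by
  refine ⟨fun γ1 γ2 u v w hu hv => ?_, fun γ1 γ2 u v w hu hv => ?_,
    fun a b => A.toVMod.liftC2 (-1) (by norm_num) a b, fun a b => A.toVMod.liftC2 0 le_rfl a b,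
    fun a m => B.liftC2 (-1) (by norm_num) a m, fun a m => B.liftC2 0 le_rfl a m,
    fun _ _ => rfl, fun _ _ => rfl, fun _ _ => rfl, fun _ _ => rfl, ?_, ?_, ?_, ?_, ?_⟩
  · rw [sub_right_comm, B.YM_zero_commutator (-1) hu hv, sub_self]
    exact zero_mem _
  · rw [← Submodule.Quotient.mk_eq_zero, Submodule.Quotient.mk_sub, Submodule.Quotient.mk_sub,
      Submodule.Quotient.mk_smul, B.mk_YM_zero_YM_neg_one hu hv]
    abel
  · rintro ⟨u⟩ ⟨v⟩ ⟨w⟩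
    exact (B.mk_YM_neg_one_assoc u v w).symm
  · rintro ⟨w⟩
    exact congrArg Submodule.Quotient.mk (B.vacuum w)
  · rintro γ1 γ2 u v hu hv ⟨w⟩
    exact congrArg Submodule.Quotient.mk (B.YM_zero_commutator 0 hu hv w).symm
  · rintro γ1 γ2 u v hu hv ⟨w⟩
    exact congrArg (Submodule.Quotient.mk (p := C2M B))
      (sub_eq_iff_eq_add.mp (B.YM_zero_commutator (-1) hu hv w))
  · rintro γ1 γ2 u v hu hv ⟨w⟩
    exact B.mk_YM_zero_YM_neg_one hu hv w

/-- for a `(G_Γ, β, γ0)`-vertex algebra `V` and a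
`(G_Γ, β, γ0)`-left `V`-module `M`, assuming
`β(γ1,γ2)·β(γ1,γ3) = β(γ1,γ2+γ3)`:
(i) `Y^M_0(u, Y^M_{-1}(v,w)) - Y^M_{-1}(Y_0(u,v), w)
     - β(γ1,γ2) • Y^M_{-1}(v, Y^M_0(u,w)) ∈ C₂(M)`;
(ii) `Y^M_0(Y_{-1}(u,v), w) - Y^M_{-1}(u, Y^M_0(v,w))
     - β(γ1,γ2) • Y^M_{-1}(v, Y^M_0(u,w)) ∈ C₂(M)`.
Consequently `R(M) = M/C₂(M)`, with action induced by `Y^M_{-1}` and bracket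
induced by `Y^M_0`, is a `(G_Γ, β)`-left Poisson module for the
`β`-commutative `(G_Γ, β)`-Poisson algebra `R(V) = V/C₂(V)` of degree `0`. -/
theorem statement16 {k Γ V M : Type*} [Field k] [CharZero k] [AddCommGroup Γ]
    [DecidableEq Γ] [AddCommGroup V] [Module k V] [AddCommGroup M] [Module k M]
    (γ0 : Γ) (β : Γ → Γ → k) (A : VA k Γ γ0 β V) (B : VMod A M)
    (hβmul : ∀ γ1 γ2 γ3 : Γ, β γ1 γ2 * β γ1 γ3 = β γ1 (γ2 + γ3)) :
    (∀ (γ1 γ2 : Γ) (u v : V) (w : M), u ∈ A.Vg γ1 → v ∈ A.Vg γ2 →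
      B.YM 0 u (B.YM (-1) v w) - B.YM (-1) (A.Y 0 u v) w
        - β γ1 γ2 • B.YM (-1) v (B.YM 0 u w) ∈ C2M B) ∧
    (∀ (γ1 γ2 : Γ) (u v : V) (w : M), u ∈ A.Vg γ1 → v ∈ A.Vg γ2 →
      B.YM 0 (A.Y (-1) u v) w - B.YM (-1) u (B.YM 0 v w)
        - β γ1 γ2 • B.YM (-1) v (B.YM 0 u w) ∈ C2M B) ∧
    (∃ (π π0 : (V ⧸ C2 A) → (V ⧸ C2 A) → (V ⧸ C2 A))
       (πM π0M : (V ⧸ C2 A) → (M ⧸ C2M B) → (M ⧸ C2M B)),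
      (∀ u v : V, π (Submodule.Quotient.mk u) (Submodule.Quotient.mk v)
          = Submodule.Quotient.mk (A.Y (-1) u v)) ∧
      (∀ u v : V, π0 (Submodule.Quotient.mk u) (Submodule.Quotient.mk v)
          = Submodule.Quotient.mk (A.Y 0 u v)) ∧
      (∀ (v : V) (w : M),
        πM (Submodule.Quotient.mk v) (Submodule.Quotient.mk w)
          = Submodule.Quotient.mk (B.YM (-1) v w)) ∧
      (∀ (v : V) (w : M),
        π0M (Submodule.Quotient.mk v) (Submodule.Quotient.mk w)
          = Submodule.Quotient.mk (B.YM 0 v w)) ∧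
      -- `R(M)` is a left module for the algebra `R(V)`
      (∀ (a b : V ⧸ C2 A) (m : M ⧸ C2M B), πM (π a b) m = πM a (πM b m)) ∧
      (∀ m : M ⧸ C2M B, πM (Submodule.Quotient.mk A.vac) m = m) ∧
      -- `R(M)` is a left Lie module for the Lie bracket of `R(V)`
      (∀ (γ1 γ2 : Γ) (u v : V), u ∈ A.Vg γ1 → v ∈ A.Vg γ2 →
        ∀ m : M ⧸ C2M B,
        π0M (π0 (Submodule.Quotient.mk u) (Submodule.Quotient.mk v)) m
          = π0M (Submodule.Quotient.mk u) (π0M (Submodule.Quotient.mk v) m)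
            - β γ1 γ2 •
                π0M (Submodule.Quotient.mk v)
                  (π0M (Submodule.Quotient.mk u) m)) ∧
      -- Poisson module compatibility (3)
      (∀ (γ1 γ2 : Γ) (u v : V), u ∈ A.Vg γ1 → v ∈ A.Vg γ2 →
        ∀ m : M ⧸ C2M B,
        π0M (Submodule.Quotient.mk u) (πM (Submodule.Quotient.mk v) m)
          = πM (π0 (Submodule.Quotient.mk u) (Submodule.Quotient.mk v)) m
            + β γ1 γ2 •
                πM (Submodule.Quotient.mk v)
                  (π0M (Submodule.Quotient.mk u) m)) ∧
      -- Poisson module compatibility (4)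
      (∀ (γ1 γ2 : Γ) (u v : V), u ∈ A.Vg γ1 → v ∈ A.Vg γ2 →
        ∀ m : M ⧸ C2M B,
        π0M (π (Submodule.Quotient.mk u) (Submodule.Quotient.mk v)) m
          = πM (Submodule.Quotient.mk u) (π0M (Submodule.Quotient.mk v) m)
            + β γ1 γ2 •
                πM (Submodule.Quotient.mk v)
                  (π0M (Submodule.Quotient.mk u) m))) :=
  statement16_general γ0 β A B
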